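/- Let n ≥ 1 and define p_i* = ((i−1)√2 + 1) / ((n−1)√2 + 2) for i ∈ {1,…,n}. Then (p_1*,…,p_n*) is a global minimizer of F_n on the ordered feasible region: 0 ≤ p_1* ≤ ⋯ ≤ p_n* ≤ 1, and for every (q_1,…,q_n) with 0 ≤ q_1 ≤ q_2 ≤ ⋯ ≤ q_n ≤ 1 one has ∫₀¹ ∫₀¹ min_{1 ≤ i ≤ n} (|x − p_i*| + |y − p_i*|) dy dx ≤ ∫₀¹ ∫₀¹ min_{1 ≤ i ≤ n} (|x − q_i| + |y − q_i|) dy dx. -/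

import Mathlib

/-!
Order a customer–provider pair as `a ≤ b`. Routing through a hub `p` costs `b - a` plus twice
the distance from `p` to `[a, b]`, and for ordered hubs the distance from the hub set to `[a, b]`
splits into one term for each end segment and each gap between consecutive hubs, at most one of
them nonzero. Each such term is a pyramid `min (tent x) (tent y)` over a square; adding up the
volumes gives `F_n(p) = (1 + 2 p₁³ + 2 (1 - pₙ)³ + ∑ (p_{k+1} - p_k)³) / 3`. This is a convex
function of the spacings, which sum to `1`, and the tangent bound `t³ ≥ a³ + 3a²(t - a)` shows
that it is minimised where the marginal costs agree, `2 p₁² = 2 (1 - pₙ)² = (p_{k+1} - p_k)²`: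
that is `p*`.
-/

open intervalIntegral

lemma abs_sub_add_abs_sub_eq (x y p : ℝ) :
    |x - p| + |y - p| = |x - y| + 2 * (max (min x y - p) 0 + max (p - max x y) 0) := by
  rcases le_total x y with h | h <;>
  simp only [min_def, max_def, abs_eq_max_neg, h] <;> split_ifs <;> linarith

/-- `L` is the distance from `[a, b]` to a set of hubs with largest element `p`; the identity
describes the effect of adding a hub `q ≥ p`. -/
lemma min_max_sub_add_max_sub_of_le {a b p q L : ℝ} (hab : a ≤ b) (hpq : p ≤ q)
    (hL : max (a - p) 0 ≤ L) (hL' : L ≤ max (a - p) 0 + max (p - b) 0) :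
    min L (max (a - q) 0 + max (q - b) 0)
      = L - max (a - p) 0 + max (a - q) 0 + min (max (a - p) 0) (max (q - b) 0) := by
  simp only [min_def, max_def] at *
  split_ifs at * <;> linarith

theorem inf'_max_sub_add_max_sub_eq {a b : ℝ} (hab : a ≤ b) {p : ℕ → ℝ} {n : ℕ} (hn : 1 ≤ n)
    (hp : MonotoneOn p (Set.Icc 1 n)) :
    (Finset.Icc 1 n).inf' (Finset.nonempty_Icc.mpr hn)
        (fun i => max (a - p i) 0 + max (p i - b) 0)
      = max (p 1 - b) 0 + max (a - p n) 0
        + ∑ k ∈ Finset.Ico 1 n, min (max (a - p k) 0) (max (p (k + 1) - b) 0) := by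
  induction n, hn using Nat.le_induction with
  | base => simp [add_comm]
  | succ n hn ih =>
    have hpn : MonotoneOn p (Set.Icc 1 n) := hp.mono (Set.Icc_subset_Icc_right n.le_succ)
    have hle : p n ≤ p (n + 1) := hp ⟨hn, n.le_succ⟩ ⟨by omega, le_rfl⟩ n.le_succ
    set L := (Finset.Icc 1 n).inf' (Finset.nonempty_Icc.mpr hn)
      (fun i => max (a - p i) 0 + max (p i - b) 0)
    have hL : max (a - p n) 0 ≤ L := by
      have : 0 ≤ ∑ k ∈ Finset.Ico 1 n, min (max (a - p k) 0) (max (p (k + 1) - b) 0) :=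
        Finset.sum_nonneg fun k _ => le_min (le_max_right _ _) (le_max_right _ _)
      linarith [ih hpn, le_max_right (p 1 - b) 0]
    have hL' : L ≤ max (a - p n) 0 + max (p n - b) 0 :=
      Finset.inf'_le _ (Finset.mem_Icc.mpr ⟨hn, le_rfl⟩)
    have hsplit : (Finset.Icc 1 (n + 1)).inf' (Finset.nonempty_Icc.mpr (by omega))
        (fun i => max (a - p i) 0 + max (p i - b) 0)
        = min L (max (a - p (n + 1)) 0 + max (p (n + 1) - b) 0) := by
      simp only [← Finset.insert_Icc_right_eq_Icc_add_one (by omega : 1 ≤ n + 1)]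
      rw [Finset.inf'_insert, min_comm]
    rw [hsplit, min_max_sub_add_max_sub_of_le hab hle hL hL', Finset.sum_Ico_succ_top hn,
      ih hpn]
    ring

theorem inf'_abs_sub_add_abs_sub_eq {p : ℕ → ℝ} {n : ℕ} (hn : 1 ≤ n)
    (hp : MonotoneOn p (Set.Icc 1 n)) (x y : ℝ) :
    (Finset.Icc 1 n).inf' (Finset.nonempty_Icc.mpr hn) (fun i => |x - p i| + |y - p i|)
      = |x - y| + 2 * (max (p 1 - max x y) 0 + max (min x y - p n) 0
        + ∑ k ∈ Finset.Ico 1 n, min (max (min x y - p k) 0) (max (p (k + 1) - max x y) 0)) := by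
  simp_rw [abs_sub_add_abs_sub_eq x y]
  rw [← inf'_max_sub_add_max_sub_eq min_le_max hn hp]
  exact (map_finset_inf' (OrderHom.mk (fun t => |x - y| + 2 * t) fun s t hst => by
    dsimp only; linarith) _ _).symm

theorem integral_eq_of_forall_eq_quadratic {f : ℝ → ℝ} {a b : ℝ} (c₀ c₁ c₂ : ℝ) (hab : a ≤ b)
    (hf : ∀ x ∈ Set.Icc a b, f x = c₀ + c₁ * x + c₂ * x ^ 2) :
    ∫ x in a..b, f x = c₀ * (b - a) + c₁ * (b ^ 2 - a ^ 2) / 2 + c₂ * (b ^ 3 - a ^ 3) / 3 := by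
  rw [integral_congr fun x hx => hf x (Set.uIcc_of_le hab ▸ hx),
    integral_add ((by fun_prop : Continuous fun x : ℝ => c₀ + c₁ * x).intervalIntegrable _ _)
      ((by fun_prop : Continuous fun x : ℝ => c₂ * x ^ 2).intervalIntegrable _ _),
    integral_add intervalIntegrable_const
      ((by fun_prop : Continuous fun x : ℝ => c₁ * x).intervalIntegrable _ _),
    integral_const_mul, integral_id, integral_const_mul, integral_pow]
  simp
  ring

theorem integral_integral_add {f g : ℝ → ℝ → ℝ} (hf : Continuous (Function.uncurry f))
    (hg : Continuous (Function.uncurry g)) (a b c d : ℝ) :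
    ∫ x in a..b, ∫ y in c..d, (f x y + g x y)
      = (∫ x in a..b, ∫ y in c..d, f x y) + ∫ x in a..b, ∫ y in c..d, g x y := by
  have hinner : ∀ x, ∫ y in c..d, (f x y + g x y)
      = (∫ y in c..d, f x y) + ∫ y in c..d, g x y := fun x =>
    integral_add ((hf.uncurry_left x).intervalIntegrable c d)
      ((hg.uncurry_left x).intervalIntegrable c d)
  simp_rw [hinner]
  exact integral_add
    ((continuous_parametric_intervalIntegral_of_continuous' hf c d).intervalIntegrable a b)
    ((continuous_parametric_intervalIntegral_of_continuous' hg c d).intervalIntegrable a b)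

theorem integral_integral_finsetSum {ι : Type*} (s : Finset ι) {f : ι → ℝ → ℝ → ℝ}
    (hf : ∀ i ∈ s, Continuous (Function.uncurry (f i))) (a b c d : ℝ) :
    ∫ x in a..b, ∫ y in c..d, ∑ i ∈ s, f i x y = ∑ i ∈ s, ∫ x in a..b, ∫ y in c..d, f i x y := by
  have hinner : ∀ x, ∫ y in c..d, ∑ i ∈ s, f i x y = ∑ i ∈ s, ∫ y in c..d, f i x y := fun x =>
    integral_finsetSum fun i hi => ((hf i hi).uncurry_left x).intervalIntegrable c d
  simp_rw [hinner]
  exact integral_finsetSum fun i hi =>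
    (continuous_parametric_intervalIntegral_of_continuous' (hf i hi) c d).intervalIntegrable a b

theorem integral_integral_comp_one_sub (f : ℝ → ℝ → ℝ) :
    ∫ x in (0:ℝ)..1, ∫ y in (0:ℝ)..1, f (1 - x) (1 - y)
      = ∫ x in (0:ℝ)..1, ∫ y in (0:ℝ)..1, f x y := by
  simp only [integral_comp_sub_left (f _) (1 : ℝ),
    integral_comp_sub_left (fun x => ∫ y in (1 - 1 : ℝ)..(1 - 0), f x y) (1 : ℝ)]
  norm_num

theorem integral_integral_abs_sub :
    ∫ x in (0:ℝ)..1, ∫ y in (0:ℝ)..1, |x - y| = 1 / 3 := by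
  have hf (x : ℝ) : Continuous fun y : ℝ => |x - y| := by fun_prop
  have hinner : ∀ x ∈ Set.Icc (0:ℝ) 1, ∫ y in (0:ℝ)..1, |x - y| = 1 / 2 - x + x ^ 2 := by
    rintro x ⟨hx₀, hx₁⟩
    rw [← integral_add_adjacent_intervals ((hf x).intervalIntegrable 0 x)
        ((hf x).intervalIntegrable x 1),
      integral_eq_of_forall_eq_quadratic x (-1) 0 hx₀ fun y ⟨_, hy⟩ => by
        rw [abs_of_nonneg (by linarith)]; ring,
      integral_eq_of_forall_eq_quadratic (-x) 1 0 hx₁ fun y ⟨hy, _⟩ => by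
        rw [abs_of_nonpos (by linarith)]; ring]
    ring
  rw [integral_eq_of_forall_eq_quadratic (1 / 2) (-1) 1 zero_le_one fun x hx => by
    rw [hinner x hx]; ring]
  norm_num

theorem integral_min_ramp {m c : ℝ} (hm : 0 ≤ m) (hmc : m ≤ c) (hc : c ≤ 1) :
    ∫ y in (0:ℝ)..1, min m (max (c - y) 0) = m * c - m ^ 2 / 2 := by
  have hf : Continuous fun y : ℝ => min m (max (c - y) 0) := by fun_prop
  rw [← integral_add_adjacent_intervals (hf.intervalIntegrable 0 (c - m))
      (hf.intervalIntegrable (c - m) 1),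
    ← integral_add_adjacent_intervals (hf.intervalIntegrable (c - m) c)
      (hf.intervalIntegrable c 1),
    integral_eq_of_forall_eq_quadratic m 0 0 (by linarith) fun y ⟨h₁, h₂⟩ => by
      simp only [min_def, max_def]; split_ifs <;> linarith,
    integral_eq_of_forall_eq_quadratic c (-1) 0 (by linarith) fun y ⟨h₁, h₂⟩ => by
      simp only [min_def, max_def]; split_ifs <;> linarith,
    integral_eq_of_forall_eq_quadratic 0 0 0 hc fun y ⟨h₁, h₂⟩ => by
      simp only [min_def, max_def]; split_ifs <;> linarith]
  ring

theorem integral_integral_max_sub_max {c : ℝ} (hc₀ : 0 ≤ c) (hc₁ : c ≤ 1) :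
    ∫ x in (0:ℝ)..1, ∫ y in (0:ℝ)..1, max (c - max x y) 0 = c ^ 3 / 3 := by
  have hinner : ∀ x ∈ Set.uIcc (0:ℝ) 1, ∫ y in (0:ℝ)..1, max (c - max x y) 0
      = max (c - x) 0 * c - max (c - x) 0 ^ 2 / 2 := by
    intro x hx
    rw [Set.uIcc_of_le zero_le_one] at hx
    simp_rw [← min_sub_sub_left, max_min_distrib_right]
    exact integral_min_ramp (le_max_right _ _) (max_le (by linarith [hx.1]) hc₀) hc₁
  have hf : Continuous fun x : ℝ => max (c - x) 0 * c - max (c - x) 0 ^ 2 / 2 := by fun_prop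
  rw [integral_congr hinner,
    ← integral_add_adjacent_intervals (hf.intervalIntegrable 0 c) (hf.intervalIntegrable c 1),
    integral_eq_of_forall_eq_quadratic (c ^ 2 / 2) 0 (-1 / 2) hc₀ fun x ⟨_, hx⟩ => by
      rw [max_eq_left (by linarith)]; ring,
    integral_eq_of_forall_eq_quadratic 0 0 0 hc₁ fun x ⟨hx, _⟩ => by
      rw [max_eq_right (by linarith)]; ring]
  ring

theorem integral_integral_max_min_sub {c : ℝ} (hc₀ : 0 ≤ c) (hc₁ : c ≤ 1) :
    ∫ x in (0:ℝ)..1, ∫ y in (0:ℝ)..1, max (min x y - c) 0 = (1 - c) ^ 3 / 3 := by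
  rw [← integral_integral_max_sub_max (c := 1 - c) (by linarith) (by linarith),
    ← integral_integral_comp_one_sub]
  simp_rw [min_sub_sub_left, sub_right_comm]

theorem integral_min_tent {m u v : ℝ} (hm : 0 ≤ m) (hmuv : 2 * m ≤ v - u) (hu : 0 ≤ u)
    (hv : v ≤ 1) :
    ∫ y in (0:ℝ)..1, min m (max (min (y - u) (v - y)) 0) = m * (v - u - m) := by
  have hf : Continuous fun y : ℝ => min m (max (min (y - u) (v - y)) 0) := by fun_prop
  rw [← integral_add_adjacent_intervals (hf.intervalIntegrable 0 u) (hf.intervalIntegrable u 1),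
    ← integral_add_adjacent_intervals (hf.intervalIntegrable u (u + m))
      (hf.intervalIntegrable (u + m) 1),
    ← integral_add_adjacent_intervals (hf.intervalIntegrable (u + m) (v - m))
      (hf.intervalIntegrable (v - m) 1),
    ← integral_add_adjacent_intervals (hf.intervalIntegrable (v - m) v)
      (hf.intervalIntegrable v 1),
    integral_eq_of_forall_eq_quadratic 0 0 0 hu fun y ⟨h₁, h₂⟩ => by
      simp only [min_def, max_def]; split_ifs <;> linarith,
    integral_eq_of_forall_eq_quadratic (-u) 1 0 (by linarith) fun y ⟨h₁, h₂⟩ => by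
      simp only [min_def, max_def]; split_ifs <;> linarith,
    integral_eq_of_forall_eq_quadratic m 0 0 (by linarith) fun y ⟨h₁, h₂⟩ => by
      simp only [min_def, max_def]; split_ifs <;> linarith,
    integral_eq_of_forall_eq_quadratic v (-1) 0 (by linarith) fun y ⟨h₁, h₂⟩ => by
      simp only [min_def, max_def]; split_ifs <;> linarith,
    integral_eq_of_forall_eq_quadratic 0 0 0 (by linarith) fun y ⟨h₁, h₂⟩ => by
      simp only [min_def, max_def]; split_ifs <;> linarith]
  ring

theorem integral_integral_gap {u v : ℝ} (hu : 0 ≤ u) (huv : u ≤ v) (hv : v ≤ 1) :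
    ∫ x in (0:ℝ)..1, ∫ y in (0:ℝ)..1, min (max (min x y - u) 0) (max (v - max x y) 0)
      = (v - u) ^ 3 / 6 := by
  set tent : ℝ → ℝ := fun t => max (min (t - u) (v - t)) 0 with htent
  have hpyramid (x y : ℝ) :
      min (max (min x y - u) 0) (max (v - max x y) 0) = min (tent x) (tent y) := by
    simp only [htent, ← min_sub_sub_left, ← min_sub_sub_right, max_min_distrib_right,
      min_min_min_comm]
  have hinner (x : ℝ) : ∫ y in (0:ℝ)..1, min (tent x) (tent y) = tent x * (v - u - tent x) :=
    integral_min_tent (le_max_right _ _)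
      (by simp only [htent, max_def, min_def]; split_ifs <;> linarith) hu hv
  have hf : Continuous fun x => tent x * (v - u - tent x) := by fun_prop
  simp_rw [hpyramid, hinner]
  rw [← integral_add_adjacent_intervals (hf.intervalIntegrable 0 u) (hf.intervalIntegrable u 1),
    ← integral_add_adjacent_intervals (hf.intervalIntegrable u v) (hf.intervalIntegrable v 1),
    integral_eq_of_forall_eq_quadratic 0 0 0 hu fun x ⟨_, hx⟩ => by
      simp only [htent, min_def, max_def]; split_ifs <;> linarith,
    integral_eq_of_forall_eq_quadratic (-(u * v)) (u + v) (-1) huv fun x ⟨hx₁, hx₂⟩ => by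
      simp only [htent, min_def, max_def]; split_ifs <;> nlinarith,
    integral_eq_of_forall_eq_quadratic 0 0 0 hv fun x ⟨hx, _⟩ => by
      simp only [htent, min_def, max_def]; split_ifs <;> linarith]
  ring

def spacingCost (n : ℕ) (p : ℕ → ℝ) : ℝ :=
  2 * p 1 ^ 3 + 2 * (1 - p n) ^ 3 + ∑ k ∈ Finset.Ico 1 n, (p (k + 1) - p k) ^ 3

theorem integral_integral_inf'_eq_spacingCost {p : ℕ → ℝ} {n : ℕ} (hn : 1 ≤ n) (hp₀ : 0 ≤ p 1)
    (hp : MonotoneOn p (Set.Icc 1 n)) (hp₁ : p n ≤ 1) :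
    ∫ x in (0:ℝ)..1, ∫ y in (0:ℝ)..1,
        (Finset.Icc 1 n).inf' (Finset.nonempty_Icc.mpr hn) (fun i => |x - p i| + |y - p i|)
      = (1 + spacingCost n p) / 3 := by
  have hmem {i : ℕ} (h₁ : 1 ≤ i) (h₂ : i ≤ n) : i ∈ Set.Icc 1 n := ⟨h₁, h₂⟩
  have hp1n : p 1 ≤ p n := hp (hmem le_rfl hn) (hmem hn le_rfl) hn
  have hgap : ∀ k ∈ Finset.Ico 1 n, 0 ≤ p k ∧ p k ≤ p (k + 1) ∧ p (k + 1) ≤ 1 := by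
    intro k hk
    obtain ⟨hk₁, hk₂⟩ := Finset.mem_Ico.mp hk
    exact ⟨hp₀.trans (hp (hmem le_rfl hn) (hmem hk₁ hk₂.le) hk₁),
      hp (hmem hk₁ hk₂.le) (hmem (by omega) hk₂) k.le_succ,
      (hp (hmem (by omega) hk₂) (hmem hn le_rfl) hk₂).trans hp₁⟩
  simp only [inf'_abs_sub_add_abs_sub_eq hn hp]
  rw [integral_integral_add (by fun_prop) (by fun_prop)]
  simp_rw [integral_const_mul]
  rw [integral_integral_add (by fun_prop) (by fun_prop),
    integral_integral_add (by fun_prop) (by fun_prop),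
    integral_integral_finsetSum _ (fun k _ => by fun_prop), integral_integral_abs_sub,
    integral_integral_max_sub_max hp₀ (hp1n.trans hp₁),
    integral_integral_max_min_sub (hp₀.trans hp1n) hp₁,
    Finset.sum_congr rfl fun k hk => integral_integral_gap (hgap k hk).1 (hgap k hk).2.1
      (hgap k hk).2.2, spacingCost, ← Finset.sum_div]
  ring

lemma cube_tangent_le {a t : ℝ} (ha : 0 ≤ a) (ht : 0 ≤ t) :
    a ^ 3 + 3 * a ^ 2 * (t - a) ≤ t ^ 3 := by
  nlinarith [mul_nonneg (sq_nonneg (t - a)) (by linarith : 0 ≤ t + 2 * a)]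

theorem spacingCost_le_of_balanced {n : ℕ} (hn : 1 ≤ n) {p q : ℕ → ℝ} {a c : ℝ} (ha : 0 ≤ a)
    (hc : 0 ≤ c) (hca : c ^ 2 = 2 * a ^ 2) (hp₁ : p 1 = a) (hpn : 1 - p n = a)
    (hgap : ∀ k ∈ Finset.Ico 1 n, p (k + 1) - p k = c) (hq₀ : 0 ≤ q 1)
    (hq : MonotoneOn q (Set.Icc 1 n)) (hq₁ : q n ≤ 1) :
    spacingCost n p ≤ spacingCost n q := by
  have hinner : ∑ k ∈ Finset.Ico 1 n, (p (k + 1) - p k) ^ 3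
      + 3 * c ^ 2 * ((q n - q 1) - (1 - 2 * a))
      ≤ ∑ k ∈ Finset.Ico 1 n, (q (k + 1) - q k) ^ 3 := by
    rw [show 1 - 2 * a = p n - p 1 by linarith, ← Finset.sum_Ico_sub q hn,
      ← Finset.sum_Ico_sub p hn, ← Finset.sum_sub_distrib, Finset.mul_sum,
      ← Finset.sum_add_distrib]
    refine Finset.sum_le_sum fun k hk => ?_
    obtain ⟨hk₁, hk₂⟩ := Finset.mem_Ico.mp hk
    have hqk : q k ≤ q (k + 1) := hq ⟨hk₁, hk₂.le⟩ ⟨by omega, hk₂⟩ k.le_succ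
    rw [hgap k hk]
    linarith [cube_tangent_le hc (sub_nonneg.mpr hqk)]
  have hleft := cube_tangent_le ha hq₀
  have hright := cube_tangent_le ha (sub_nonneg.mpr hq₁)
  rw [spacingCost, spacingCost, hp₁, hpn]
  linear_combination 2 * hleft + 2 * hright + hinner - 3 * (q n - q 1 - (1 - 2 * a)) * hca

theorem stmt_12 (n : ℕ) (hn : 1 ≤ n) (pstar : ℕ → ℝ)
    (hpstar : ∀ i, pstar i
      = (((i : ℝ) - 1) * Real.sqrt 2 + 1) / (((n : ℝ) - 1) * Real.sqrt 2 + 2)) :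
    (0 ≤ pstar 1 ∧ (∀ i j, 1 ≤ i → i ≤ j → j ≤ n → pstar i ≤ pstar j) ∧ pstar n ≤ 1)
    ∧ ∀ q : ℕ → ℝ, 0 ≤ q 1 → (∀ i j, 1 ≤ i → i ≤ j → j ≤ n → q i ≤ q j) → q n ≤ 1 →
        (∫ x in (0:ℝ)..1, ∫ y in (0:ℝ)..1,
            (Finset.Icc 1 n).inf' (Finset.nonempty_Icc.mpr hn)
              (fun i => |x - pstar i| + |y - pstar i|))
          ≤ ∫ x in (0:ℝ)..1, ∫ y in (0:ℝ)..1,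
              (Finset.Icc 1 n).inf' (Finset.nonempty_Icc.mpr hn)
                (fun i => |x - q i| + |y - q i|) := by
  have hs : 0 < √2 := by positivity
  have hd : 0 < ((n : ℝ) - 1) * √2 + 2 := by
    have : (1 : ℝ) ≤ n := by exact_mod_cast hn
    nlinarith
  set a := 1 / (((n : ℝ) - 1) * √2 + 2)
  set c := √2 * a
  have hp (i : ℕ) : pstar i = a + ((i : ℝ) - 1) * c := by
    rw [hpstar]; field_simp; ring
  have hsum : 2 * a + ((n : ℝ) - 1) * c = 1 := by simp only [a, c]; field_simp; ring
  have ha : 0 ≤ a := by positivity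
  have hc : 0 ≤ c := by positivity
  have hmono : Monotone pstar := fun i j hij => by
    simp only [hp]; gcongr
  have hp₁ : pstar 1 = a := by simp [hp]
  have hpn : 1 - pstar n = a := by rw [hp]; linarith
  refine ⟨⟨hp₁ ▸ ha, fun i j _ hij _ => hmono hij, by linarith⟩, fun q hq₀ hq hq₁ => ?_⟩
  have hqm : MonotoneOn q (Set.Icc 1 n) := fun i hi j hj hij => hq i j hi.1 hij hj.2
  rw [integral_integral_inf'_eq_spacingCost hn (hp₁ ▸ ha) (hmono.monotoneOn _) (by linarith),
    integral_integral_inf'_eq_spacingCost hn hq₀ hqm hq₁]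
  gcongr
  exact spacingCost_le_of_balanced hn ha hc (by rw [mul_pow, Real.sq_sqrt zero_le_two]) hp₁ hpn
    (fun k _ => by rw [hp, hp]; push_cast; ring) hq₀ hqm hq₁
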